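/- arXiv:1703.05496 — 2 statements merged into one kernel-verified Lean document; each statement's English description precedes it below -/
import Mathlib

section
/- Let (X, d) be a metric space, let W > 0 and R* > 0 be reals, and let p : ℝ → X satisfy d(p(x), p(y)) ≤ |x − y| for all x, y ∈ [0, W]. Suppose there are l ≥ 1 optimal selection positions given by a strictly increasing map x : Fin l → ℝ with x(0) = 0, x(i) ∈ [0, W] for all i, x(i+1) − x(i) ≤ R* for all i < l − 1, and W − x(l−1) ≤ R*, together with agents q : Fin l → X satisfying d(p(x(i)), q(i)) ≤ R* for every i. Let m = ⌈W / R*⌉ and define selection positions s : Fin m → ℝ by s(0) = 0 and s(j) = W − (m − j)·R* for 1 ≤ j ≤ m − 1, and set s(m) = W. Then m ≤ l and there exists an injective map g : Fin m → Fin l such that for every j ∈ Fin m, d(p(s(j)), q(g(j))) + (s(j+1) − s(j)) ≤ 3·R*. -/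
/-- Abstract formulation of the 3-approximation theorem for the Matching
algorithm: given an optimal solution of range `R*` with selection positions
`x` and agents `q`, the algorithm's selection positions `s` (with
`s 0 = 0`, `s j = W - (m - j)·R*` for `1 ≤ j ≤ m - 1`, and `s m = W`, where
`m = ⌈W / R*⌉`) can be injectively assigned agents so that each assigned
agent's fetch-plus-carry cost is at most `3·R*`. -/
theorem matching_three_approx {X : Type*} [MetricSpace X]
    (W Rstar : ℝ) (hW : 0 < W) (hR : 0 < Rstar)
    (p : ℝ → X)
    (hp : ∀ x ∈ Set.Icc (0 : ℝ) W, ∀ y ∈ Set.Icc (0 : ℝ) W,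
      dist (p x) (p y) ≤ |x - y|)
    (l : ℕ) (hl : 1 ≤ l)
    (x : Fin l → ℝ) (hxmono : StrictMono x)
    (hx0 : x ⟨0, by omega⟩ = 0)
    (hxmem : ∀ i, x i ∈ Set.Icc (0 : ℝ) W)
    (hxgap : ∀ i : Fin l, ∀ h : (i : ℕ) + 1 < l, x ⟨(i : ℕ) + 1, h⟩ - x i ≤ Rstar)
    (hxlast : W - x ⟨l - 1, by omega⟩ ≤ Rstar)
    (q : Fin l → X) (hq : ∀ i, dist (p (x i)) (q i) ≤ Rstar)
    (m : ℕ) (hm : m = ⌈W / Rstar⌉₊)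
    (s : ℕ → ℝ)
    (hs0 : s 0 = 0)
    (hsj : ∀ j : ℕ, 1 ≤ j → j ≤ m - 1 → s j = W - ((m : ℝ) - j) * Rstar)
    (hsm : s m = W) :
    m ≤ l ∧ ∃ g : Fin m → Fin l, Function.Injective g ∧
      ∀ j : Fin m, dist (p (s j)) (q (g j)) + (s ((j : ℕ) + 1) - s j) ≤ 3 * Rstar := by
  classical
  have hl0 : 0 < l := hl
  -- basic facts about m
  have hm1 : 1 ≤ m := by
    rw [hm]
    exact Nat.one_le_ceil_iff.mpr (div_pos hW hR)
  have hWleM : W ≤ (m : ℝ) * Rstar := by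
    rw [hm]
    have h1 : W / Rstar ≤ (⌈W / Rstar⌉₊ : ℝ) := Nat.le_ceil _
    calc W = W / Rstar * Rstar := by field_simp
      _ ≤ (⌈W / Rstar⌉₊ : ℝ) * Rstar := mul_le_mul_of_nonneg_right h1 hR.le
  have hWgtM : ((m : ℝ) - 1) * Rstar < W := by
    have h2 : m - 1 < ⌈W / Rstar⌉₊ := by omega
    have h3 : ((m - 1 : ℕ) : ℝ) < W / Rstar := Nat.lt_ceil.mp h2
    have h4 : ((m - 1 : ℕ) : ℝ) = (m : ℝ) - 1 := by
      rw [Nat.cast_sub hm1]; norm_num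
    rw [h4] at h3
    calc ((m:ℝ)-1) * Rstar < W / Rstar * Rstar := mul_lt_mul_of_pos_right h3 hR
      _ = W := by field_simp
  -- upper bound on x
  have hxub : ∀ j (hj : j < l), x ⟨j, hj⟩ ≤ (j : ℝ) * Rstar := by
    intro j
    induction j with
    | zero => intro hj; simp [hx0]
    | succ k ih =>
      intro hj
      have hk : k < l := by omega
      have h1 := hxgap ⟨k, hk⟩ hj
      have h2 := ih hk
      push_cast
      push_cast at h2
      simp only at h1
      nlinarith
  have hml : m ≤ l := by
    have h1 : x ⟨l-1, by omega⟩ ≤ ((l-1 : ℕ) : ℝ) * Rstar := hxub (l-1) (by omega)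
    have hc : ((l-1:ℕ):ℝ) = (l:ℝ) - 1 := by rw [Nat.cast_sub hl]; norm_num
    have h2 : W ≤ (l : ℝ) * Rstar := by nlinarith [hxlast]
    rw [hm]
    refine Nat.ceil_le.mpr ?_
    rw [div_le_iff₀ hR]
    exact h2
  -- facts about s
  have hseq : ∀ j, 1 ≤ j → j ≤ m → s j = W - ((m:ℝ) - j) * Rstar := by
    intro j h1 h2
    rcases eq_or_lt_of_le h2 with h | h
    · subst h; rw [hsm]; simp
    · exact hsj j h1 (by omega)
  have hslo : ∀ j, j ≤ m → W - ((m:ℝ) - j) * Rstar ≤ s j := by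
    intro j h2
    rcases Nat.eq_zero_or_pos j with h | h
    · subst h; rw [hs0]; push_cast; nlinarith
    · rw [hseq j h h2]
  have hsnn : ∀ j, j ≤ m → 0 ≤ s j := by
    intro j h2
    rcases Nat.eq_zero_or_pos j with h | h
    · subst h; rw [hs0]
    · rw [hseq j h h2]
      have hjm : (j:ℝ) ≤ (m:ℝ) := Nat.cast_le.mpr h2
      have h1 : (1:ℝ) ≤ (j:ℝ) := by exact_mod_cast h
      nlinarith
  have hsW : ∀ j, j ≤ m → s j ≤ W := by
    intro j h2
    rcases Nat.eq_zero_or_pos j with h | h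
    · subst h; rw [hs0]; exact hW.le
    · rw [hseq j h h2]
      have hjm : (j:ℝ) ≤ (m:ℝ) := Nat.cast_le.mpr h2
      nlinarith
  have hstep_le : ∀ j, j < m → s (j+1) - s j ≤ Rstar := by
    intro j hj
    have h1 := hseq (j+1) (by omega) (by omega)
    have h2 := hslo j (by omega)
    push_cast at h1
    linarith
  have hstep_eq : ∀ j, 1 ≤ j → j+1 ≤ m → s (j+1) = s j + Rstar := by
    intro j h1 h2
    rw [hseq (j+1) (by omega) h2, hseq j h1 (by omega)]
    push_cast
    ring
  -- the greedy index function
  have hTne : ∀ j : ℕ,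
      (insert (⟨0, hl0⟩ : Fin l) (Finset.univ.filter (fun i => x i ≤ s j))).Nonempty :=
    fun j => ⟨_, Finset.mem_insert_self _ _⟩
  set h : ℕ → Fin l := fun j =>
    (insert (⟨0, hl0⟩ : Fin l) (Finset.univ.filter (fun i => x i ≤ s j))).max' (hTne j) with hh
  have hmem : ∀ j, j ≤ m → x (h j) ≤ s j := by
    intro j hj
    have hmm : h j ∈ insert (⟨0, hl0⟩ : Fin l) (Finset.univ.filter (fun i => x i ≤ s j)) :=
      Finset.max'_mem _ (hTne j)
    rcases Finset.mem_insert.mp hmm with h1 | h1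
    · rw [h1, hx0]; exact hsnn j hj
    · exact (Finset.mem_filter.mp h1).2
  have hmax : ∀ j (i : Fin l), x i ≤ s j → i ≤ h j := by
    intro j i hi
    exact Finset.le_max'
      (insert (⟨0, hl0⟩ : Fin l) (Finset.univ.filter (fun i => x i ≤ s j))) i
      (Finset.mem_insert_of_mem (Finset.mem_filter.mpr ⟨Finset.mem_univ _, hi⟩))
  have hnotle : ∀ j (i : Fin l), h j < i → s j < x i := by
    intro j i hi
    by_contra hcon
    push_neg at hcon
    exact absurd (hmax j i hcon) (not_le.mpr hi)
  have hh0 : (h 0 : ℕ) = 0 := by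
    have h1 : x (h 0) ≤ s 0 := hmem 0 (by omega)
    rw [hs0] at h1
    by_contra hne
    have h2 : (0:ℕ) < (h 0 : ℕ) := Nat.pos_of_ne_zero hne
    have hlt : x ⟨0, hl0⟩ < x (h 0) := hxmono (by rw [Fin.lt_def]; exact h2)
    rw [hx0] at hlt
    linarith
  refine ⟨hml, ?_⟩
  set g : Fin m → Fin l := fun j => ⟨max (j : ℕ) (h (j:ℕ) : ℕ), by
    exact max_lt (lt_of_lt_of_le j.isLt hml) (h (j:ℕ)).isLt⟩ with hg
  -- distance bound
  have hxg : ∀ j : Fin m, |x (g j) - s (j:ℕ)| ≤ Rstar := by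
    intro j
    have hjm : (j:ℕ) < m := j.isLt
    have hjm' : (j:ℕ) ≤ m := le_of_lt hjm
    rcases le_or_gt ((j:ℕ)) ((h (j:ℕ) : ℕ)) with hc | hc
    · have hge : g j = h (j:ℕ) := by
        apply Fin.ext
        show max ((j:ℕ)) ((h (j:ℕ):ℕ)) = _
        exact max_eq_right hc
      rw [hge]
      have hle := hmem (j:ℕ) hjm'
      rcases lt_or_ge ((h (j:ℕ) : ℕ) + 1) l with hlt | hge2
      · have hstr : s (j:ℕ) < x ⟨(h (j:ℕ):ℕ)+1, hlt⟩ :=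
          hnotle (j:ℕ) ⟨(h (j:ℕ):ℕ)+1, hlt⟩ (by rw [Fin.lt_def]; simp)
        have hgap := hxgap (h (j:ℕ)) hlt
        rw [abs_le]
        constructor <;> linarith
      · have hval : (h (j:ℕ) : ℕ) = l - 1 := by
          have := (h (j:ℕ)).isLt; omega
        have hxl : x (h (j:ℕ)) = x ⟨l-1, by omega⟩ := by
          congr 1
          exact Fin.ext hval
        have hsWj := hsW (j:ℕ) hjm'
        rw [abs_le]
        constructor
        · rw [hxl]; linarith
        · linarith
    · have hge : g j = ⟨(j:ℕ), lt_of_lt_of_le hjm hml⟩ := by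
        apply Fin.ext
        show max ((j:ℕ)) ((h (j:ℕ):ℕ)) = _
        exact max_eq_left hc.le
      rw [hge]
      have hstr : s (j:ℕ) < x ⟨(j:ℕ), lt_of_lt_of_le hjm hml⟩ :=
        hnotle (j:ℕ) _ (by rw [Fin.lt_def]; exact hc)
      have hub := hxub (j:ℕ) (lt_of_lt_of_le hjm hml)
      have hlo := hslo (j:ℕ) hjm'
      have hjm'' : (j:ℝ) ≤ (m:ℝ) := Nat.cast_le.mpr hjm'
      rw [abs_le]
      constructor
      · linarith
      · nlinarith
  -- strict monotonicity of the assignment values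
  have hgstep : ∀ j : ℕ, j + 1 < m → max j (h j : ℕ) < max (j+1) (h (j+1) : ℕ) := by
    intro j hj
    rcases Nat.eq_zero_or_pos j with rfl | hj1
    · rw [hh0]
      have := le_max_left 1 ((h 1 : ℕ))
      omega
    · have hhl : (h j : ℕ) + 1 < l := by
        by_contra hcon
        have hval : (h j:ℕ) = l - 1 := by have := (h j).isLt; omega
        have h1 : x (h j) ≤ s j := hmem j (by omega)
        have h2 : s j = W - ((m:ℝ) - j) * Rstar := hseq j hj1 (by omega)
        have h3 : x (h j) = x ⟨l-1, by omega⟩ := by congr 1; exact Fin.ext hval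
        have h5 : ((j:ℝ)) + 2 ≤ (m:ℝ) := by exact_mod_cast (by omega : j + 2 ≤ m)
        rw [h3] at h1
        nlinarith [hxlast, hR]
      have hgap := hxgap (h j) hhl
      have h1 : x ⟨(h j : ℕ)+1, hhl⟩ ≤ s (j+1) := by
        have ha := hmem j (by omega)
        have hb := hstep_eq j hj1 (by omega)
        linarith
      have h2 : (⟨(h j:ℕ)+1, hhl⟩ : Fin l) ≤ h (j+1) := hmax (j+1) _ h1
      have h3 : (h j : ℕ) + 1 ≤ (h (j+1) : ℕ) := h2
      calc max j (h j :ℕ) < max j (h j:ℕ) + 1 := Nat.lt_succ_self _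
        _ = max (j+1) ((h j:ℕ)+1) := (Nat.succ_max_succ _ _).symm
        _ ≤ max (j+1) (h (j+1):ℕ) := max_le_max le_rfl h3
  have hmono : ∀ b a : ℕ, a < b → b < m → max a (h a:ℕ) < max b (h b:ℕ) := by
    intro b
    induction b with
    | zero => intro a ha _; exact absurd ha (Nat.not_lt_zero a)
    | succ c ih =>
      intro a ha hb
      rcases Nat.lt_succ_iff_lt_or_eq.mp ha with h' | h'
      · exact lt_trans (ih a h' (by omega)) (hgstep c hb)
      · subst h'; exact hgstep a hb
  refine ⟨g, ?_, ?_⟩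
  · intro a b hab
    have hv : max (a:ℕ) (h (a:ℕ):ℕ) = max (b:ℕ) (h (b:ℕ):ℕ) := congrArg Fin.val hab
    rcases lt_trichotomy (a:ℕ) (b:ℕ) with h' | h' | h'
    · exact absurd hv (ne_of_lt (hmono (b:ℕ) (a:ℕ) h' b.isLt))
    · exact Fin.ext h'
    · exact absurd hv.symm (ne_of_lt (hmono (a:ℕ) (b:ℕ) h' a.isLt))
  · intro j
    have h1 := hxg j
    have h2 := hstep_le (j:ℕ) j.isLt
    have hd1 : dist (p (s (j:ℕ))) (q (g j)) ≤
        dist (p (s (j:ℕ))) (p (x (g j))) + dist (p (x (g j))) (q (g j)) :=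
      dist_triangle _ _ _
    have hd2 : dist (p (s (j:ℕ))) (p (x (g j))) ≤ |s (j:ℕ) - x (g j)| :=
      hp _ ⟨hsnn _ (le_of_lt j.isLt), hsW _ (le_of_lt j.isLt)⟩ _ (hxmem (g j))
    have hd3 := hq (g j)
    rw [abs_sub_comm] at hd2
    rw [dist_comm (p (x (g j))) (q (g j))] at hd1
    have habs : x (g j) - s (j:ℕ) ≤ |x (g j) - s (j:ℕ)| := le_abs_self _
    have habs2 : -(x (g j) - s (j:ℕ)) ≤ |x (g j) - s (j:ℕ)| := neg_le_abs _
    rw [dist_comm] at hd3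
    linarith
end

section
/- For every real n ≥ 1, ((n + 2 + √(4n+1))·(√(4n+1) − 1)) / (2n + 1 − √(4n+1)) > √n. -/
/-- The approximation-ratio lower bound of Greedy₁ on an unweighted graph on
`n` vertices is strictly greater than `√n`, for every real `n ≥ 1`. -/
theorem greedy_one_unweighted_ratio_gt_sqrt (n : ℝ) (hn : 1 ≤ n) :
    ((n + 2 + Real.sqrt (4 * n + 1)) * (Real.sqrt (4 * n + 1) - 1)) /
      (2 * n + 1 - Real.sqrt (4 * n + 1)) > Real.sqrt n := by
  set s := Real.sqrt (4 * n + 1) with hs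
  set t := Real.sqrt n with ht
  have hs0 : 0 ≤ s := Real.sqrt_nonneg _
  have ht0 : 0 ≤ t := Real.sqrt_nonneg _
  have hs2 : s * s = 4 * n + 1 := Real.mul_self_sqrt (by linarith)
  have ht2 : t * t = n := Real.mul_self_sqrt (by linarith)
  have hsg : 2 < s := by nlinarith
  have h2t : 2 * t < s := by nlinarith
  have hden : 0 < 2 * n + 1 - s := by nlinarith [sq_nonneg (s - 1)]
  rw [gt_iff_lt, lt_div_iff₀ hden]
  nlinarith [mul_nonneg (by linarith : (0:ℝ) ≤ s - 2 * t) (mul_self_nonneg t)]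
end
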